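/- Extend the modal logic GL (for the modality □) with a new operator ■ and the axiom schemas: (i) □φ → ■φ; (ii) ■(φ→ψ) → (■φ → ■ψ); (iii) ■φ → ■■φ; call the resulting system GL^■. Then for every formula φ, GL^■ ⊢ ■(■φ→φ) → ■φ, i.e., Löb's axiom is derivable for ■. -/
import Mathlib


/-!
**Statement 12.** (Lemma "GL^■".)  Extend the modal logic `GL` (for the
modality `□`) with a new operator `■` and the axiom schemas
(i) `□φ → ■φ`, (ii) `■(φ→ψ) → (■φ → ■ψ)`, (iii) `■φ → ■■φ`;
Necessitation is closed under `□` only.  Then Löb's axiom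
`■(■φ → φ) → ■φ` is derivable for `■`.
-/

namespace GLBoxSquare

/-- Formulas of the bimodal language with `□` (`box`) and `■` (`bbox`). -/
inductive BF : Type
  | var : ℕ → BF
  | bot : BF
  | imp : BF → BF → BF
  | box : BF → BF
  | bbox : BF → BF

/-- `φ` is a propositional tautology (modalized formulas treated as atoms). -/
def BTaut (φ : BF) : Prop :=
  ∀ w : BF → Prop, ¬ w .bot → (∀ a b, w (.imp a b) ↔ (w a → w b)) → w φ

/-- The system `GL^■`: `GL` for `□` (propositional tautologies, the
distribution axiom, Löb's axiom, Modus Ponens and `□`-Necessitation)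
together with the three axiom schemas relating `□` and `■`. -/
inductive GLb : BF → Prop
  | taut {a} : BTaut a → GLb a
  | k (a b) : GLb (.imp (.box (.imp a b)) (.imp (.box a) (.box b)))
  | lob (a) : GLb (.imp (.box (.imp (.box a) a)) (.box a))
  | boxToBbox (a) : GLb (.imp (.box a) (.bbox a))
  | bK (a b) : GLb (.imp (.bbox (.imp a b)) (.imp (.bbox a) (.bbox b)))
  | bFour (a) : GLb (.imp (.bbox a) (.bbox (.bbox a)))
  | mp {a b} : GLb (.imp a b) → GLb a → GLb b
  | nec {a} : GLb a → GLb (.box a)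

/-- For every formula `φ`,
`GL^■ ⊢ ■(■φ → φ) → ■φ`. -/
theorem bbox_lob (φ : BF) :
    GLb (.imp (.bbox (.imp (.bbox φ) φ)) (.bbox φ)) := by
  set B : BF := .imp (.bbox φ) φ with hB
  set G : BF := .imp (.bbox B) (.bbox φ) with hG
  -- axiom instances
  have h1 : GLb (.imp (.box G) (.bbox G)) := GLb.boxToBbox G
  have h2 : GLb (.imp (.bbox G) (.imp (.bbox (.bbox B)) (.bbox (.bbox φ)))) :=
    GLb.bK (.bbox B) (.bbox φ)
  have h3 : GLb (.imp (.bbox B) (.bbox (.bbox B))) := GLb.bFour B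
  have h4 : GLb (.imp (.bbox B) (.imp (.bbox (.bbox φ)) (.bbox φ))) :=
    GLb.bK (.bbox φ) φ
  -- a propositional tautology chaining the above
  have T : GLb (.imp (.imp (.box G) (.bbox G))
      (.imp (.imp (.bbox G) (.imp (.bbox (.bbox B)) (.bbox (.bbox φ))))
        (.imp (.imp (.bbox B) (.bbox (.bbox B)))
          (.imp (.imp (.bbox B) (.imp (.bbox (.bbox φ)) (.bbox φ)))
            (.imp (.box G) G))))) := by
    apply GLb.taut
    intro w _ hi
    simp only [hG, hi]
    tauto
  have hGG : GLb (.imp (.box G) G) :=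
    GLb.mp (GLb.mp (GLb.mp (GLb.mp T h1) h2) h3) h4
  -- Löb rule for □
  have hbox : GLb (.box G) := GLb.mp (GLb.lob G) (GLb.nec hGG)
  exact GLb.mp hGG hbox

end GLBoxSquare
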